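/- Let g ∈ Aut(T) be hyperbolic and let w be a point of T. Suppose [v0, w] ∩ γ(g) is a segment [x, y] with x ≠ y, where x = proj_{γ(g)}(v0) and y = proj_{γ(g)}(w), and suppose g translates y towards x (i.e., g·y and x lie in the same connected component of γ(g) ∖ {y}). Then: d(v0, w) > d(v0, g·w) if 2·d(x, y) > l(g); d(v0, w) = d(v0, g·w) if 2·d(x, y) = l(g); and d(v0, w) < d(v0, g·w) if 2·d(x, y) < l(g). -/

import Mathlib

noncomputable section

open Pointwise

namespace TreePaper

variable {V : Type*}

section Defs

variable (T : SimpleGraph V) (v0 : V)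

/-- The vertex set of the geodesic segment `[u, w]` in the tree `T`. -/
def seg (u w : V) : Set V := {x | T.dist u x + T.dist x w = T.dist u w}

/-- `|g| = d(v0, g·v0)`. -/
def nrm (g : T ≃g T) : ℕ := T.dist v0 (g v0)

/-- `δ(g, h) = (|g| + |h| - |g⁻¹h|)/2`, as a rational number. -/
noncomputable def dlt (g h : T ≃g T) : ℚ :=
  ((nrm T v0 g : ℚ) + (nrm T v0 h : ℚ) - (nrm T v0 (g⁻¹ * h) : ℚ)) / 2

/-- An automorphism is elliptic if it fixes a vertex or inverts an edge. -/
def IsElliptic (g : T ≃g T) : Prop :=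
  (∃ v : V, g v = v) ∨ (∃ u w : V, T.Adj u w ∧ g u = w ∧ g w = u)

/-- Hyperbolic = not elliptic. -/
def IsHyperbolic (g : T ≃g T) : Prop := ¬ IsElliptic T g

/-- Translation length: the minimum of `d(v, g·v)` over all vertices `v`. -/
noncomputable def tl (g : T ≃g T) : ℕ := sInf (Set.range fun v : V => T.dist v (g v))

/-- The (vertex set of the) axis of `g`: vertices moved exactly the translation length. -/
def axisSet (g : T ≃g T) : Set V := {v : V | T.dist v (g v) = tl T g}

/-- A subgroup is purely hyperbolic if every nontrivial element is hyperbolic. -/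
def PurelyHyperbolic (G : Subgroup (T ≃g T)) : Prop :=
  ∀ g ∈ G, g ≠ 1 → IsHyperbolic T g

/-- `X^± = X ∪ X⁻¹`. -/
def Xpm (X : Set (T ≃g T)) : Set (T ≃g T) := X ∪ X⁻¹

/-- Condition N1: `X ∩ X⁻¹ = ∅`. -/
def N1 (X : Set (T ≃g T)) : Prop := X ∩ X⁻¹ = ∅

/-- Condition N2: `|xy| ≥ max (|x|, |y|)` for `x, y ∈ X^±` with `x ≠ y⁻¹`. -/
def N2 (X : Set (T ≃g T)) : Prop :=
  ∀ x ∈ Xpm T X, ∀ y ∈ Xpm T X, x ≠ y⁻¹ →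
    max (nrm T v0 x) (nrm T v0 y) ≤ nrm T v0 (x * y)

/-- Condition N3: `|xyz| > |x| + |z| - |y|` for suitable `x, y, z ∈ X^±`. -/
def N3 (X : Set (T ≃g T)) : Prop :=
  ∀ x ∈ Xpm T X, ∀ y ∈ Xpm T X, ∀ z ∈ Xpm T X, x ≠ y⁻¹ → y ≠ z⁻¹ →
    (nrm T v0 x : ℤ) + (nrm T v0 z : ℤ) - (nrm T v0 y : ℤ) < (nrm T v0 (x * y * z) : ℤ)

/-- Condition N2′: `2δ(x⁻¹, y) ≤ min (|x|, |y|)`. -/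
noncomputable def N2' (X : Set (T ≃g T)) : Prop :=
  ∀ x ∈ Xpm T X, ∀ y ∈ Xpm T X, x ≠ y⁻¹ →
    2 * dlt T v0 x⁻¹ y ≤ min (nrm T v0 x : ℚ) (nrm T v0 y : ℚ)

/-- Condition N3′: `δ(x⁻¹, y) + δ(y⁻¹, z) < |y|`. -/
noncomputable def N3' (X : Set (T ≃g T)) : Prop :=
  ∀ x ∈ Xpm T X, ∀ y ∈ Xpm T X, ∀ z ∈ Xpm T X, x ≠ y⁻¹ → y ≠ z⁻¹ →
    dlt T v0 x⁻¹ y + dlt T v0 y⁻¹ z < (nrm T v0 y : ℚ)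

/-- `X` is N-reduced: no nontrivial elliptic elements, and N1, N2, N3 hold. -/
def NReduced (X : Set (T ≃g T)) : Prop :=
  (∀ x ∈ X, x ≠ 1 → ¬ IsElliptic T x) ∧ N1 T X ∧ N2 T v0 X ∧ N3 T v0 X

/-- `H(g)`: the vertex set of the initial segment of `[v0, g·v0]` of length `⌊|g|/2⌋`. -/
def halfSet (g : T ≃g T) : Set V :=
  {x : V | x ∈ seg T v0 (g v0) ∧ T.dist v0 x ≤ nrm T v0 g / 2}

/-- The endpoint of `H(g)`: the vertex on `[v0, g·v0]` at distance `⌊|g|/2⌋` from `v0`.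
(Since paths in a tree starting at `v0` are uniquely determined by their endpoints, we
identify the path `H(g)` with this vertex.) -/
noncomputable def halfVertex (g : T ≃g T) : V :=
  letI := Classical.dec (∃ m, m ∈ seg T v0 (g v0) ∧ T.dist v0 m = nrm T v0 g / 2)
  if h : ∃ m, m ∈ seg T v0 (g v0) ∧ T.dist v0 m = nrm T v0 g / 2 then h.choose else v0

/-- `X` is a free basis of `⟨X⟩`: the homomorphism from the free group on `X` induced
by the inclusion is an isomorphism onto `⟨X⟩`. -/
def IsFreeBasis (X : Set (T ≃g T)) : Prop :=
  Function.Injective (FreeGroup.lift (fun x : X => (x : T ≃g T))) ∧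
  MonoidHom.range (FreeGroup.lift (fun x : X => (x : T ≃g T))) = Subgroup.closure X

/-- A subgroup of `Aut T` is discrete iff some finite set of vertices has trivial
pointwise stabilizer. -/
def IsDiscrete (G : Subgroup (T ≃g T)) : Prop :=
  ∃ F : Finset V, ∀ g ∈ G, (∀ v ∈ F, g v = v) → g = 1

end Defs

section Order

variable (T : SimpleGraph V) (v0 : V)

/-- The assumed properties of the chosen well-ordering of paths starting at `v0`
(paths from `v0` are identified with their endpoints): it is a well-order, shorter
paths precede longer paths, and it is lexicographic. -/
structure IsPathOrder (lt : V → V → Prop) : Prop where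
  wellOrder : IsWellOrder V lt
  short : ∀ u w : V, T.dist v0 u < T.dist v0 w → lt u w
  lex : ∀ u w : V, T.dist v0 u = T.dist v0 w → ∀ u' w' : V,
    u' ∈ seg T v0 u → w' ∈ seg T v0 w → T.dist v0 u' = T.dist v0 w' → lt u' w' → lt u w

/-- The ordering `≺` on two-element sets of paths (identified with their endpoints):
`A ≺ B` iff `A ≠ B` and the least element of the symmetric difference lies in `A`. -/
def pairLt (lt : V → V → Prop) (A B : Set V) : Prop :=
  A ≠ B ∧ ∃ m ∈ (A \ B) ∪ (B \ A), m ∈ A ∧ ∀ x ∈ (A \ B) ∪ (B \ A), x ≠ m → lt m x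

/-- `g ≺ h` iff `|g| = |h|` and `{H(g), H(g⁻¹)} ≺ {H(h), H(h⁻¹)}`. -/
noncomputable def autPrec (lt : V → V → Prop) (g h : T ≃g T) : Prop :=
  nrm T v0 g = nrm T v0 h ∧
    pairLt lt {halfVertex T v0 g, halfVertex T v0 g⁻¹}
      {halfVertex T v0 h, halfVertex T v0 h⁻¹}

/-- `g <* h` iff `|g| < |h|` or `g ≺ h`. -/
noncomputable def autLtStar (lt : V → V → Prop) (g h : T ≃g T) : Prop :=
  nrm T v0 g < nrm T v0 h ∨ autPrec T v0 lt g h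

/-- Condition N4: `x <* xy` for all `x, y ∈ X^±` with `x ≠ y⁻¹`. -/
noncomputable def N4 (lt : V → V → Prop) (X : Set (T ≃g T)) : Prop :=
  ∀ x ∈ Xpm T X, ∀ y ∈ Xpm T X, x ≠ y⁻¹ → autLtStar T v0 lt x (x * y)

/-- `X` is strongly N-reduced (w.r.t. `v0` and `<*`): a free basis satisfying N1 and N4. -/
noncomputable def StronglyNReduced (lt : V → V → Prop) (X : Set (T ≃g T)) : Prop :=
  IsFreeBasis T X ∧ N1 T X ∧ N4 T v0 lt X

end Order

section Words

variable (T : SimpleGraph V)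

/-- The product `a₀ a₁ ⋯ a_{k-1}`. -/
def wordProd (a : ℕ → T ≃g T) (k : ℕ) : T ≃g T := ((List.range k).map a).prod

/-- The product `aᵢ a_{i+1} ⋯ a_j` (inclusive endpoints). -/
def segProd (a : ℕ → T ≃g T) (i j : ℕ) : T ≃g T := ((List.range' i (j + 1 - i)).map a).prod

/-- `a 0, …, a (n-1)` is a reduced word in `X`: each letter lies in `X^±` and no letter
is followed by its inverse. -/
def IsReducedWord (X : Set (T ≃g T)) (a : ℕ → T ≃g T) (n : ℕ) : Prop :=
  (∀ i < n, a i ∈ Xpm T X) ∧ ∀ i, i + 1 < n → a (i + 1) ≠ (a i)⁻¹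

end Words

section Geometry

variable (T : SimpleGraph V) (v0 : V)

/-- `p` is a nearest-point projection of `w` to the set `A`. -/
def NearestPt (A : Set V) (w p : V) : Prop :=
  p ∈ A ∧ ∀ z ∈ A, T.dist w p ≤ T.dist w z

/-- Distance between two sets of vertices. -/
noncomputable def setDist (A B : Set V) : ℕ :=
  sInf {n : ℕ | ∃ a ∈ A, ∃ b ∈ B, T.dist a b = n}

/-- A vertex `p` of the axis of `g` lies in the half-open interval `U_g^0`
(of radius `l(g)/2` about the projection `c` of `v0`, closed at the `<`-smaller end):
either `d(c,p) < l(g)/2`, or `d(c,p) = l(g)/2` and `p` precedes the opposite boundary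
vertex in the ordering. -/
def inU0 (lt : V → V → Prop) (g : T ≃g T) (c p : V) : Prop :=
  2 * T.dist c p < tl T g ∨
    (2 * T.dist c p = tl T g ∧
      ∀ p', p' ∈ axisSet T g → T.dist c p' = T.dist c p → p' ≠ p → lt p p')

/-- `X` admits a fundamental system: `X` has no nontrivial elliptic elements and for all
distinct `g, h ∈ X`, the projection of the axis of `h` to the axis of `g` is contained
in `U_g^0`. -/
def AdmitsFundamentalSystem (lt : V → V → Prop) (X : Set (T ≃g T)) : Prop :=
  (∀ x ∈ X, x ≠ 1 → ¬ IsElliptic T x) ∧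
  ∀ g ∈ X, ∀ h ∈ X, g ≠ h → ∀ c z p : V,
    NearestPt T (axisSet T g) v0 c → z ∈ axisSet T h →
    NearestPt T (axisSet T g) z p → inU0 T lt g c p

end Geometry

/-!
The axis of a hyperbolic `g` is a geodesic line on which `g` translates by `l = l(g)`, and every
vertex reaches a segment of it through its nearest point. Hence, when `x ≠ g·y`,
`d(v0, g·w) = d(v0, x) + d(x, g·y) + d(y, w)`, while `d(v0, w) = d(v0, x) + d(x, y) + d(y, w)`.
As `g` moves `y` by `l` towards `x`, `d(x, g·y) = |l - d(x, y)|`, and comparing the two sums gives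
the trichotomy.

The line structure is seen on the windows `[b, g^M·b]` (`b` on the axis): they are geodesics lying
in the axis, and they contain every axis point `u` close to their middle, because the gate `p` of
`u` on the window satisfies `d(u, g·u) = 2 d(u, p) + l`.
-/

open SimpleGraph

theorem _root_.SimpleGraph.Iso.dist_apply_le {W : Type*} {G : SimpleGraph V}
    {G' : SimpleGraph W} (f : G ≃g G') (u v : V) : G'.dist (f u) (f v) ≤ G.dist u v := by
  by_cases h : G.Reachable u v
  · obtain ⟨p, hp⟩ := h.exists_walk_length_eq_dist
    simpa [hp] using dist_le (p.map f.toHom)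
  · have h' : ¬ G'.Reachable (f u) (f v) := fun h' => h (by simpa using h'.map f.symm.toHom)
    simp [dist_eq_zero_of_not_reachable h']

theorem _root_.SimpleGraph.Iso.dist_apply {W : Type*} {G : SimpleGraph V}
    {G' : SimpleGraph W} (f : G ≃g G') (u v : V) : G'.dist (f u) (f v) = G.dist u v :=
  (f.dist_apply_le u v).antisymm (by simpa using f.symm.dist_apply_le (f u) (f v))

section Segments

variable {T : SimpleGraph V}

lemma mem_seg {u w z : V} : z ∈ seg T u w ↔ T.dist u z + T.dist z w = T.dist u w := Iff.rfl

lemma seg_comm (u w : V) : seg T u w = seg T w u := by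
  ext z
  have h₁ : T.dist u z = T.dist z u := dist_comm
  have h₂ : T.dist z w = T.dist w z := dist_comm
  have h₃ : T.dist u w = T.dist w u := dist_comm
  simp only [mem_seg]
  omega

lemma left_mem_seg (u w : V) : u ∈ seg T u w := by simp [seg]

lemma right_mem_seg (u w : V) : w ∈ seg T u w := by simp [seg]

lemma apply_mem_seg (f : T ≃g T) {u w z : V} (h : z ∈ seg T u w) :
    f z ∈ seg T (f u) (f w) := by
  simpa only [mem_seg, f.dist_apply] using h

lemma seg_subset_of_mem_seg_left (hc : T.Connected) {u w z : V} (hz : z ∈ seg T u w) :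
    seg T u z ⊆ seg T u w := by
  intro m hm
  simp only [mem_seg] at *
  have := hc.dist_triangle (u := m) (v := z) (w := w)
  have := hc.dist_triangle (u := u) (v := m) (w := w)
  omega

lemma seg_subset_of_mem_seg_right (hc : T.Connected) {u w z : V} (hz : z ∈ seg T u w) :
    seg T z w ⊆ seg T u w := by
  rw [seg_comm z, seg_comm u]
  rw [seg_comm] at hz
  exact seg_subset_of_mem_seg_left hc hz

lemma mem_seg_of_mem_seg_of_mem_seg (hc : T.Connected) {u a m z : V} (hm : m ∈ seg T u a)
    (hz : z ∈ seg T m a) : m ∈ seg T u z := by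
  simp only [mem_seg] at *
  have := hc.dist_triangle (u := u) (v := m) (w := z)
  have := hc.dist_triangle (u := u) (v := z) (w := a)
  omega

lemma mem_seg_of_mem_seg_of_mem_seg' (hc : T.Connected) {u w z m : V} (hz : z ∈ seg T u w)
    (hm : m ∈ seg T u z) : z ∈ seg T m w := by
  rw [seg_comm] at hz hm ⊢
  exact mem_seg_of_mem_seg_of_mem_seg hc hz hm

lemma exists_mem_seg_dist_eq (hc : T.Connected) {u w : V} {k : ℕ} (hk : k ≤ T.dist u w) :
    ∃ z ∈ seg T u w, T.dist u z = k := by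
  obtain ⟨p, hp⟩ := hc.exists_walk_length_eq_dist u w
  have h₁ : T.dist u (p.getVert k) ≤ k :=
    (dist_le (p.take k)).trans (by simp [Walk.take_length])
  have h₂ : T.dist (p.getVert k) w ≤ T.dist u w - k := by
    simpa [Walk.drop_length, hp] using dist_le (p.drop k)
  have := hc.dist_triangle (u := u) (v := p.getVert k) (w := w)
  exact ⟨p.getVert k, by simp only [mem_seg]; omega, by omega⟩

end Segments

section Tree

variable {T : SimpleGraph V}

lemma eq_of_mem_seg_of_dist_eq (hT : T.IsTree) {u w z z' : V} (hz : z ∈ seg T u w)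
    (hz' : z' ∈ seg T u w) (h : T.dist u z = T.dist u z') : z = z' := by
  have hc := hT.connected
  obtain ⟨p₁, hp₁⟩ := hc.exists_walk_length_eq_dist u z
  obtain ⟨p₂, hp₂⟩ := hc.exists_walk_length_eq_dist z w
  obtain ⟨q₁, hq₁⟩ := hc.exists_walk_length_eq_dist u z'
  obtain ⟨q₂, hq₂⟩ := hc.exists_walk_length_eq_dist z' w
  have hp : (p₁.append p₂).IsPath :=
    (p₁.append p₂).isPath_of_length_eq_dist
      (by rw [Walk.length_append, hp₁, hp₂]; exact hz)
  have hq : (q₁.append q₂).IsPath :=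
    (q₁.append q₂).isPath_of_length_eq_dist
      (by rw [Walk.length_append, hq₁, hq₂]; exact hz')
  have hpq := (hT.existsUnique_path u w).unique hp hq
  have hend : ∀ {x : V} (r₁ : T.Walk u x) (r₂ : T.Walk x w),
      (r₁.append r₂).getVert r₁.length = x :=
    fun r₁ r₂ => by rw [Walk.getVert_append', if_pos le_rfl, Walk.getVert_length]
  calc z = (p₁.append p₂).getVert p₁.length := (hend p₁ p₂).symm
    _ = (q₁.append q₂).getVert q₁.length := by rw [hpq, hp₁, hq₁, h]
    _ = z' := hend q₁ q₂

lemma mem_seg_of_dist_le (hT : T.IsTree) {u w z z' : V} (hz : z ∈ seg T u w)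
    (hz' : z' ∈ seg T u w) (h : T.dist u z ≤ T.dist u z') : z ∈ seg T u z' := by
  obtain ⟨m, hm, hdm⟩ := exists_mem_seg_dist_eq hT.connected h
  rwa [eq_of_mem_seg_of_dist_eq hT hz (seg_subset_of_mem_seg_left hT.connected hz' hm) hdm.symm]

lemma seg_subset_seg (hT : T.IsTree) {a b z z' : V} (hz : z ∈ seg T a b)
    (hz' : z' ∈ seg T a b) : seg T z z' ⊆ seg T a b := by
  have hc := hT.connected
  rcases le_total (T.dist a z) (T.dist a z') with h | h
  · exact (seg_subset_of_mem_seg_right hc (mem_seg_of_dist_le hT hz hz' h)).trans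
      (seg_subset_of_mem_seg_left hc hz')
  · rw [seg_comm]
    exact (seg_subset_of_mem_seg_right hc (mem_seg_of_dist_le hT hz' hz h)).trans
      (seg_subset_of_mem_seg_left hc hz)

lemma exists_median (hT : T.IsTree) (a b c : V) :
    ∃ m, m ∈ seg T a b ∧ m ∈ seg T a c ∧ m ∈ seg T b c := by
  have hc := hT.connected
  induction h : T.dist b c generalizing b with
  | zero =>
    obtain rfl := hc.dist_eq_zero_iff.1 h
    exact ⟨b, right_mem_seg a b, right_mem_seg a b, left_mem_seg b b⟩
  | succ n ih =>
    -- `b'` is the neighbour of `b` towards `c`. If it is closer to `a`, the median of `a, b', c`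
    -- works; otherwise `b` itself lies on `[a, c]`.
    obtain ⟨b', hb', hbb'⟩ := exists_mem_seg_dist_eq hc (u := b) (w := c) (k := 1) (by omega)
    have hb'c : T.dist b' c = n := by rw [mem_seg] at hb'; omega
    obtain ⟨m, hm₁, hm₂, hm₃⟩ := ih b' hb'c
    rw [mem_seg] at hm₁ hm₂ hm₃
    have e₁ : T.dist b b' = T.dist b' b := dist_comm
    have e₂ : T.dist b' m = T.dist m b' := dist_comm
    have t₁ := hc.dist_triangle (u := m) (v := b') (w := b)
    have t₂ := hc.dist_triangle (u := b) (v := b') (w := m)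
    have t₃ := hc.dist_triangle (u := b) (v := m) (w := c)
    rcases hT.dist_eq_dist_add_one_of_adj a (dist_eq_one_iff_adj.1 hbb') with hab | hab
    · have t₄ := hc.dist_triangle (u := a) (v := m) (w := b)
      exact ⟨m, by rw [mem_seg]; omega, hm₂, by rw [mem_seg]; omega⟩
    · rcases Nat.eq_zero_or_pos (T.dist b' m) with hm | hm
      · have t₄ := hc.dist_triangle (u := a) (v := m) (w := b')
        have t₅ := hc.dist_triangle (u := b') (v := m) (w := c)
        have t₆ := hc.dist_triangle (u := a) (v := b) (w := c)
        exact ⟨b, right_mem_seg a b, by rw [mem_seg]; omega, left_mem_seg b c⟩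
      · have e₃ : T.dist a b = T.dist b a := dist_comm
        have e₄ : T.dist a b' = T.dist b' a := dist_comm
        have e₅ : T.dist a m = T.dist m a := dist_comm
        have hb : b ∈ seg T b' a := by rw [mem_seg]; omega
        have hm' : m ∈ seg T b' a := by rw [mem_seg]; omega
        have := mem_seg_of_dist_le hT hb hm' (by omega)
        rw [mem_seg] at this
        omega

lemma exists_gate (hT : T.IsTree) (u a b : V) :
    ∃ p ∈ seg T a b, ∀ z ∈ seg T a b, p ∈ seg T u z := by
  have hc := hT.connected
  obtain ⟨m, hma, hmb, hm⟩ := exists_median hT u a b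
  refine ⟨m, hm, fun z hz => ?_⟩
  rcases le_total (T.dist a z) (T.dist a m) with h | h
  · have hzm := mem_seg_of_dist_le hT hz hm h
    rw [seg_comm] at hzm
    exact mem_seg_of_mem_seg_of_mem_seg hc hma hzm
  · exact mem_seg_of_mem_seg_of_mem_seg hc hmb
      (mem_seg_of_mem_seg_of_mem_seg' hc hz (mem_seg_of_dist_le hT hm hz h))

lemma mem_seg_of_mem_seg_of_mem_seg_of_ne (hT : T.IsTree) {a p q r : V} (hp : p ∈ seg T a q)
    (hq : q ∈ seg T p r) (hpq : p ≠ q) : q ∈ seg T a r := by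
  have hc := hT.connected
  obtain ⟨m, hm, hgate⟩ := exists_gate hT r a q
  have hmp := hgate p hp
  have hmq := hgate q (right_mem_seg a q)
  rw [seg_comm] at hp hm
  rw [mem_seg] at hq hmp hmq
  have e₁ : T.dist p q = T.dist q p := dist_comm
  have e₂ : T.dist m q = T.dist q m := dist_comm
  have e₃ : T.dist m p = T.dist p m := dist_comm
  have e₄ : T.dist r p = T.dist p r := dist_comm
  have e₅ : T.dist q r = T.dist r q := dist_comm
  have hmq' : m = q := by
    rcases le_total (T.dist q m) (T.dist q p) with h | h
    · have := mem_seg_of_dist_le hT hm hp h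
      rw [mem_seg] at this
      exact hc.dist_eq_zero_iff.1 (by omega)
    · have := mem_seg_of_dist_le hT hp hm h
      rw [mem_seg] at this
      exact absurd (hc.dist_eq_zero_iff.1 (by omega)) hpq
  subst hmq'
  rw [seg_comm]
  exact hgate a (left_mem_seg a m)

lemma dist_eq_add_add_of_forall_mem_seg (hT : T.IsTree) {u u' p q : V} (hpq : p ≠ q)
    (hp : ∀ z ∈ seg T p q, p ∈ seg T u z) (hq : ∀ z ∈ seg T p q, q ∈ seg T u' z) :
    T.dist u u' = T.dist u p + T.dist p q + T.dist q u' := by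
  have hc := hT.connected
  obtain ⟨m, hm, hmq, hmq'⟩ := exists_median hT u u' q
  have hpuq := hp q (right_mem_seg p q)
  have e₁ : T.dist p q = T.dist q p := dist_comm
  have e₂ : T.dist m q = T.dist q m := dist_comm
  have e₃ : T.dist u' m = T.dist m u' := dist_comm
  have e₄ : T.dist u' q = T.dist q u' := dist_comm
  rcases le_total (T.dist u m) (T.dist u p) with h | h
  · have hpmq := mem_seg_of_mem_seg_of_mem_seg' hc hpuq (mem_seg_of_dist_le hT hmq hpuq h)
    have hqp := hq p (left_mem_seg p q)
    have := hc.dist_triangle (u := u') (v := m) (w := p)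
    rw [mem_seg] at hpmq hqp hmq'
    exact absurd (hc.dist_eq_zero_iff.1 (by omega)) hpq
  · have hqm := hq m (mem_seg_of_mem_seg_of_mem_seg' hc hmq (mem_seg_of_dist_le hT hpuq hmq h))
    rw [mem_seg] at hm hmq hmq' hpuq hqm
    omega

lemma NearestPt.mem_seg_of_seg_subset (hT : T.IsTree) {A : Set V} {u p q z : V}
    (hp : NearestPt T A u p) (hA : seg T p q ⊆ A) (hz : z ∈ seg T p q) : p ∈ seg T u z := by
  obtain ⟨m, hm, hgate⟩ := exists_gate hT u p q
  have hmp := hgate p (left_mem_seg p q)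
  have := hp.2 m (hA hm)
  rw [mem_seg] at hmp
  obtain rfl : m = p := hT.connected.dist_eq_zero_iff.1 (by omega)
  exact hgate z hz

lemma dist_eq_add_add_of_nearestPt (hT : T.IsTree) {A : Set V} {u u' p q : V}
    (hp : NearestPt T A u p) (hq : NearestPt T A u' q) (hA : seg T p q ⊆ A) (hpq : p ≠ q) :
    T.dist u u' = T.dist u p + T.dist p q + T.dist q u' :=
  dist_eq_add_add_of_forall_mem_seg hT hpq (fun _ hz => hp.mem_seg_of_seg_subset hT hA hz)
    fun _ hz => hq.mem_seg_of_seg_subset hT (q := p) (by rwa [seg_comm]) (by rwa [seg_comm])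

end Tree

section Automorphisms

variable {T : SimpleGraph V} {g : T ≃g T}

lemma mem_axisSet {v : V} : v ∈ axisSet T g ↔ T.dist v (g v) = tl T g := Iff.rfl

lemma apply_mem_axisSet_iff {f : T ≃g T} (h : Commute g f) {v : V} :
    f v ∈ axisSet T g ↔ v ∈ axisSet T g := by
  have hgf : g (f v) = f (g v) := congrArg (· v) h.eq
  rw [mem_axisSet, mem_axisSet, hgf, f.dist_apply]

lemma NearestPt.apply {A : Set V} (f : T ≃g T) (hA : ∀ z, f z ∈ A ↔ z ∈ A) {u p : V}
    (h : NearestPt T A u p) : NearestPt T A (f u) (f p) := by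
  refine ⟨(hA p).2 h.1, fun z hz => ?_⟩
  have := h.2 (f⁻¹ z) ((hA _).1 (by rwa [RelIso.apply_inv_self]))
  rwa [f.dist_apply, ← RelIso.apply_inv_self f z, f.dist_apply]

lemma tl_le (g : T ≃g T) (v : V) : tl T g ≤ T.dist v (g v) := Nat.sInf_le ⟨v, rfl⟩

lemma tl_pos (hc : T.Connected) (hg : IsHyperbolic T g) : 0 < tl T g := by
  have := hc.nonempty
  obtain ⟨v, hv⟩ := Nat.sInf_mem (Set.range_nonempty fun v => T.dist v (g v))
  exact Nat.pos_of_ne_zero fun h => hg (Or.inl ⟨v, (hc.dist_eq_zero_iff.1 (hv.trans h)).symm⟩)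

lemma ne_apply_of_mem_axisSet (hc : T.Connected) (hg : IsHyperbolic T g) {v : V}
    (hv : v ∈ axisSet T g) : v ≠ g v := fun h => by
  rw [mem_axisSet, ← h, dist_self] at hv
  exact (tl_pos hc hg).ne hv

lemma isElliptic_of_apply_apply_eq (hT : T.IsTree) {v : V} (h : g (g v) = v) : IsElliptic T g := by
  have hc := hT.connected
  set L := T.dist v (g v)
  obtain ⟨p, hp, hvp⟩ := exists_mem_seg_dist_eq hc (u := v) (w := g v) (k := L / 2) (by omega)
  obtain ⟨p', hp', hvp'⟩ := exists_mem_seg_dist_eq hc (u := v) (w := g v) (k := L - L / 2)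
    (by omega)
  -- `g` reverses `[v, g v]`, so it fixes its midpoint or flips its middle edge.
  have hswap : ∀ {z : V}, z ∈ seg T v (g v) →
      g z ∈ seg T v (g v) ∧ T.dist v (g z) = L - T.dist v z := by
    intro z hz
    have hgz : g z ∈ seg T v (g v) := by
      have := apply_mem_seg g hz
      rwa [h, seg_comm] at this
    have e₁ := g.dist_apply v z
    have e₂ : T.dist (g z) (g v) = T.dist (g v) (g z) := dist_comm
    refine ⟨hgz, ?_⟩
    rw [mem_seg] at hgz
    omega
  obtain ⟨hgp, hgpd⟩ := hswap hp
  obtain ⟨hgp', hgpd'⟩ := hswap hp'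
  have e₁ : g p = p' := eq_of_mem_seg_of_dist_eq hT hgp hp' (by omega)
  have e₂ : g p' = p := eq_of_mem_seg_of_dist_eq hT hgp' hp (by omega)
  by_cases hpp' : p = p'
  · exact Or.inl ⟨p, e₁.trans hpp'.symm⟩
  · have hd := mem_seg_of_dist_le hT hp hp' (by omega)
    have := hc.pos_dist_of_ne hpp'
    rw [mem_seg] at hd
    exact Or.inr ⟨p, p', dist_eq_one_iff_adj.1 (by omega), e₁, e₂⟩

lemma apply_mem_seg_apply_apply (hT : T.IsTree) (hg : IsHyperbolic T g) {v : V}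
    (hv : v ∈ axisSet T g) : g v ∈ seg T v (g (g v)) := by
  have hc := hT.connected
  obtain ⟨m, hm₁, hm₂, hm₃⟩ := exists_median hT v (g v) (g (g v))
  have hgm : g m ∈ seg T (g v) (g (g v)) := apply_mem_seg g hm₁
  have hl := tl_le g m
  have e₁ := g.dist_apply v m
  have e₂ : T.dist (g v) (g (g v)) = tl T g := by rw [g.dist_apply]; exact hv
  have e₃ : T.dist m (g v) = T.dist (g v) m := dist_comm
  have e₄ : T.dist (g m) m = T.dist m (g m) := dist_comm
  rw [mem_axisSet] at hv
  rw [mem_seg] at hm₁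
  -- `m` and `g m` lie on `[g v, g² v]` at distances `d(g v, m)` and `l - d(g v, m)` from `g v`,
  -- yet `l ≤ d(m, g m)`: so `m = g v`, or `m = v` and `g` swaps `v` and `g v`.
  rcases le_total (T.dist (g v) m) (T.dist (g v) (g m)) with h | h
  · have := mem_seg_of_dist_le hT hm₃ hgm h
    rw [mem_seg] at this
    obtain rfl : g v = m := hc.dist_eq_zero_iff.1 (by omega)
    exact hm₂
  · have := mem_seg_of_dist_le hT hgm hm₃ h
    rw [mem_seg] at this hm₃
    obtain rfl : v = m := hc.dist_eq_zero_iff.1 (by omega)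
    have e₅ : T.dist (g v) v = T.dist v (g v) := dist_comm
    exact (hg (isElliptic_of_apply_apply_eq hT (eq_of_mem_seg_of_dist_eq hT
      (right_mem_seg _ _) (by rw [mem_seg]; exact hm₃) (by omega)))).elim

lemma pow_apply_mem_seg_succ_and_dist_eq (hT : T.IsTree) (hg : IsHyperbolic T g) {b : V}
    (hb : b ∈ axisSet T g) (n : ℕ) :
    (g ^ n) b ∈ seg T b ((g ^ (n + 1)) b) ∧ T.dist b ((g ^ n) b) = n * tl T g := by
  induction n with
  | zero => simp [left_mem_seg]
  | succ n ih =>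
    have hsucc : ∀ k, (g ^ (k + 1)) b = g ((g ^ k) b) := fun k => by
      rw [pow_succ', RelIso.mul_apply]
    have hn : (g ^ n) b ∈ axisSet T g := (apply_mem_axisSet_iff (Commute.self_pow g n)).2 hb
    have hd := ih.1
    rw [mem_seg, hsucc n, ih.2, mem_axisSet.1 hn] at hd
    refine ⟨mem_seg_of_mem_seg_of_mem_seg_of_ne hT ih.1 ?_ ?_,
      by rw [hsucc, add_one_mul]; omega⟩
    · rw [hsucc (n + 1), hsucc n]
      exact apply_mem_seg_apply_apply hT hg hn
    · rw [hsucc n]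
      exact ne_apply_of_mem_axisSet hT.connected hg hn

lemma dist_pow_apply (hT : T.IsTree) (hg : IsHyperbolic T g) {b : V} (hb : b ∈ axisSet T g)
    (n : ℕ) : T.dist b ((g ^ n) b) = n * tl T g :=
  (pow_apply_mem_seg_succ_and_dist_eq hT hg hb n).2

lemma pow_apply_mem_seg (hT : T.IsTree) (hg : IsHyperbolic T g) {b : V} (hb : b ∈ axisSet T g)
    {i n : ℕ} (hi : i ≤ n) : (g ^ i) b ∈ seg T b ((g ^ n) b) := by
  obtain ⟨k, rfl⟩ := Nat.exists_eq_add_of_le hi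
  have hik : (g ^ (i + k)) b = (g ^ i) ((g ^ k) b) := by rw [pow_add, RelIso.mul_apply]
  rw [mem_seg, hik, (g ^ i).dist_apply, ← hik, dist_pow_apply hT hg hb, dist_pow_apply hT hg hb,
    dist_pow_apply hT hg hb, add_mul]

lemma apply_mem_seg_pow_succ_and_dist_eq (hT : T.IsTree) (hg : IsHyperbolic T g) {b z : V}
    (hb : b ∈ axisSet T g) {M : ℕ} (hz : z ∈ seg T b ((g ^ M) b)) :
    g z ∈ seg T b ((g ^ (M + 1)) b) ∧ T.dist b (g z) = T.dist b z + tl T g := by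
  have hsucc : (g ^ (M + 1)) b = g ((g ^ M) b) := by rw [pow_succ', RelIso.mul_apply]
  have hgb : g b ∈ seg T b ((g ^ (M + 1)) b) := by
    simpa using pow_apply_mem_seg hT hg hb (i := 1) (n := M + 1) (by omega)
  have hgz : g z ∈ seg T (g b) ((g ^ (M + 1)) b) := by
    rw [hsucc]
    exact apply_mem_seg g hz
  have hgz' := seg_subset_of_mem_seg_right hT.connected hgb hgz
  refine ⟨hgz', ?_⟩
  have e := g.dist_apply z ((g ^ M) b)
  rw [← hsucc] at e
  rw [mem_seg, dist_pow_apply hT hg hb] at hz hgz'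
  rw [add_one_mul] at hgz'
  omega

lemma seg_pow_subset_axisSet (hT : T.IsTree) (hg : IsHyperbolic T g) {b : V}
    (hb : b ∈ axisSet T g) (M : ℕ) : seg T b ((g ^ M) b) ⊆ axisSet T g := by
  intro z hz
  obtain ⟨hgz, hd⟩ := apply_mem_seg_pow_succ_and_dist_eq hT hg hb hz
  have hz' := seg_subset_of_mem_seg_left hT.connected
    (pow_apply_mem_seg hT hg hb M.le_succ) hz
  have := mem_seg_of_dist_le hT hz' hgz (by omega)
  rw [mem_seg] at this
  rw [mem_axisSet]
  omega

lemma eq_of_forall_mem_seg_inv_apply (hT : T.IsTree) (hg : IsHyperbolic T g) {u p : V}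
    (hu : u ∈ axisSet T g) (hp : p ∈ axisSet T g)
    (hgate : ∀ z ∈ seg T (g⁻¹ p) (g p), p ∈ seg T u z) : u = p := by
  have hc := hT.connected
  have hmid : p ∈ seg T (g⁻¹ p) (g p) := by
    have := apply_mem_seg_apply_apply hT hg
      ((apply_mem_axisSet_iff (Commute.refl g).inv_right).2 hp)
    rwa [RelIso.apply_inv_self] at this
  -- `p` is the gate of `u`, and `g p` that of `g u`, on `[p, g p]`: so `l = 2 d(u, p) + l`.
  have h := dist_eq_add_add_of_forall_mem_seg hT (ne_apply_of_mem_axisSet hc hg hp)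
    (fun z hz => hgate z (seg_subset_of_mem_seg_right hc hmid hz))
    (fun z hz => by
      have hz' := apply_mem_seg g⁻¹ hz
      rw [RelIso.inv_apply_self] at hz'
      simpa only [RelIso.apply_inv_self] using
        apply_mem_seg g (hgate _ (seg_subset_of_mem_seg_left hc hmid hz')))
  rw [g.dist_apply, mem_axisSet.1 hu, mem_axisSet.1 hp] at h
  exact hc.dist_eq_zero_iff.1 (by omega)

lemma mem_seg_pow_of_mem_axisSet (hT : T.IsTree) (hg : IsHyperbolic T g) {b u : V}
    (hb : b ∈ axisSet T g) (hu : u ∈ axisSet T g) {N : ℕ}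
    (hN : T.dist ((g ^ N) b) u + tl T g ≤ N * tl T g) : u ∈ seg T b ((g ^ (2 * N)) b) := by
  have hc := hT.connected
  have hsucc : (g ^ (2 * N + 1)) b = g ((g ^ (2 * N)) b) := by rw [pow_succ', RelIso.mul_apply]
  have h2N : 2 * N * tl T g = N * tl T g + N * tl T g := by ring
  obtain ⟨p, hpW, hgate⟩ := exists_gate hT u b ((g ^ (2 * N)) b)
  have hpN := hgate _ (pow_apply_mem_seg hT hg hb (by omega : N ≤ 2 * N))
  -- `p` is at least `l` away from both ends of the window, which thus contains `[g⁻¹ p, g p]`.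
  have hlp : tl T g ≤ T.dist b p ∧ T.dist b p + tl T g ≤ 2 * N * tl T g := by
    have := hc.dist_triangle (u := b) (v := p) (w := (g ^ N) b)
    have := hc.dist_triangle (u := b) (v := (g ^ N) b) (w := p)
    have e₁ : T.dist ((g ^ N) b) u = T.dist u ((g ^ N) b) := dist_comm
    have e₂ : T.dist ((g ^ N) b) p = T.dist p ((g ^ N) b) := dist_comm
    rw [mem_seg] at hpN
    rw [dist_pow_apply hT hg hb] at *
    omega
  have h2NBig := pow_apply_mem_seg hT hg hb (2 * N).le_succ
  obtain ⟨hgpBig, hgpd⟩ := apply_mem_seg_pow_succ_and_dist_eq hT hg hb hpW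
  have hgpW : g p ∈ seg T b ((g ^ (2 * N)) b) :=
    mem_seg_of_dist_le hT hgpBig h2NBig (by rw [dist_pow_apply hT hg hb]; omega)
  have hpBig := seg_subset_of_mem_seg_left hc h2NBig hpW
  have hgbBig : g b ∈ seg T b ((g ^ (2 * N + 1)) b) := by
    simpa using pow_apply_mem_seg hT hg hb (i := 1) (n := 2 * N + 1) (by omega)
  have hgbp := mem_seg_of_dist_le hT hgbBig hpBig (by rw [← mem_axisSet.1 hb] at hlp; omega)
  have hginvpW : g⁻¹ p ∈ seg T b ((g ^ (2 * N)) b) := by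
    have := apply_mem_seg g⁻¹ (mem_seg_of_mem_seg_of_mem_seg' hc hpBig hgbp)
    rwa [hsucc, RelIso.inv_apply_self, RelIso.inv_apply_self] at this
  rw [← eq_of_forall_mem_seg_inv_apply hT hg hu (seg_pow_subset_axisSet hT hg hb _ hpW)
    fun z hz => hgate z (seg_subset_seg hT hginvpW hgpW hz)] at hpW
  exact hpW

lemma exists_seg_subset_axisSet (hT : T.IsTree) (hg : IsHyperbolic T g) {y : V}
    (hy : y ∈ axisSet T g) (R : ℕ) :
    ∃ a t : V, seg T a t ⊆ axisSet T g ∧ g y ∈ seg T a t ∧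
      T.dist a (g y) = T.dist a y + tl T g ∧
      ∀ u ∈ axisSet T g, T.dist y u ≤ R → u ∈ seg T a t := by
  have hb : (g ^ (R + 1))⁻¹ y ∈ axisSet T g :=
    (apply_mem_axisSet_iff (Commute.self_pow g (R + 1)).inv_right).2 hy
  have hyb : (g ^ (R + 1)) ((g ^ (R + 1))⁻¹ y) = y := RelIso.apply_inv_self _ _
  have hyW := pow_apply_mem_seg hT hg hb (by omega : R + 1 ≤ 2 * (R + 1))
  rw [hyb] at hyW
  refine ⟨_, (g ^ (2 * (R + 1))) ((g ^ (R + 1))⁻¹ y), seg_pow_subset_axisSet hT hg hb _, ?_,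
    (apply_mem_seg_pow_succ_and_dist_eq hT hg hb hyW).2,
    fun u hu hR => mem_seg_pow_of_mem_axisSet hT hg hb hu ?_⟩
  · have := pow_apply_mem_seg hT hg hb (by omega : R + 1 + 1 ≤ 2 * (R + 1))
    rwa [pow_succ' g (R + 1), RelIso.mul_apply, hyb] at this
  · have := Nat.le_mul_of_pos_right R (tl_pos hT.connected hg)
    rw [hyb, add_one_mul]
    omega

lemma seg_apply_subset_axisSet (hT : T.IsTree) (hg : IsHyperbolic T g) {x y : V}
    (hx : x ∈ axisSet T g) (hy : y ∈ axisSet T g) : seg T x (g y) ⊆ axisSet T g := by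
  obtain ⟨a, t, hax, hgyW, -, hW⟩ := exists_seg_subset_axisSet hT hg hy (T.dist x y)
  exact (seg_subset_seg hT (hW x hx dist_comm.le) hgyW).trans hax

lemma dist_apply_add_dist_eq (hT : T.IsTree) (hg : IsHyperbolic T g) {x y : V}
    (hx : x ∈ axisSet T g) (hy : y ∈ axisSet T g) (htoward : y ∉ seg T (g y) x) :
    T.dist x (g y) + T.dist x y = tl T g ∨ T.dist x (g y) + tl T g = T.dist x y := by
  obtain ⟨a, t, -, hgyW, hgya, hW⟩ := exists_seg_subset_axisSet hT hg hy (T.dist x y)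
  have hxW := hW x hx dist_comm.le
  have hyW := hW y hy (by simp)
  have e₁ : T.dist y x = T.dist x y := dist_comm
  have e₂ : T.dist (g y) x = T.dist x (g y) := dist_comm
  have hax : T.dist a x = T.dist a y + T.dist x y := by
    rcases le_total (T.dist a x) (T.dist a y) with h | h
    · refine absurd ?_ htoward
      rw [seg_comm]
      exact mem_seg_of_mem_seg_of_mem_seg' hT.connected
        (mem_seg_of_dist_le hT hyW hgyW (by omega)) (mem_seg_of_dist_le hT hxW hyW h)
    · have := mem_seg_of_dist_le hT hyW hxW h
      rw [mem_seg] at this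
      omega
  rcases le_total (T.dist a x) (T.dist a (g y)) with h | h
  · have := mem_seg_of_dist_le hT hxW hgyW h
    rw [mem_seg] at this
    omega
  · have := mem_seg_of_dist_le hT hgyW hxW h
    rw [mem_seg] at this
    omega

end Automorphisms

theorem statement_15_general {V : Type*} (T : SimpleGraph V) (hT : T.IsTree) (v0 : V)
    (g : T ≃g T) (hg : IsHyperbolic T g) (w x y : V)
    (hx : NearestPt T (axisSet T g) v0 x)
    (hy : NearestPt T (axisSet T g) w y)
    (hseg : seg T v0 w ∩ axisSet T g = seg T x y)
    (htoward : y ∉ seg T (g y) x) :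
    (tl T g < 2 * T.dist x y → T.dist v0 (g w) < T.dist v0 w) ∧
    (2 * T.dist x y = tl T g → T.dist v0 w = T.dist v0 (g w)) ∧
    (2 * T.dist x y < tl T g → T.dist v0 w < T.dist v0 (g w)) := by
  have hc := hT.connected
  have hl := tl_pos hc hg
  have hgy : NearestPt T (axisSet T g) (g w) (g y) :=
    hy.apply g fun _ => apply_mem_axisSet_iff (Commute.refl g)
  have hbridge (hne : x ≠ g y) :=
    dist_eq_add_add_of_nearestPt hT hx hgy (seg_apply_subset_axisSet hT hg hx.1 hy.1) hne
  have hxgy := dist_apply_add_dist_eq hT hg hx.1 hy.1 htoward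
  have hne (h : T.dist x y ≠ tl T g) : x ≠ g y := fun e => by
    have : T.dist x (g y) = 0 := by rw [e, dist_self]
    omega
  have hsub : seg T x y ⊆ seg T v0 w := hseg ▸ Set.inter_subset_left
  have hxy := mem_seg_of_dist_le hT (hsub (left_mem_seg x y)) (hsub (right_mem_seg x y))
    (hx.2 y hy.1)
  have hyw := hsub (right_mem_seg x y)
  have htri₁ := hc.dist_triangle (u := v0) (v := x) (w := g w)
  have htri₂ := hc.dist_triangle (u := x) (v := g y) (w := g w)
  have hgw := g.dist_apply y w
  rw [mem_seg] at hxy hyw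
  refine ⟨fun h => by omega, fun h => ?_, fun h => ?_⟩
  · have := hbridge (hne (by omega))
    omega
  · have := hbridge (hne (by omega))
    omega

/-- comparison of d(v0, w) and d(v0, g·w) according to the overlap
of [v0, w] with the axis of g, when g translates the overlap towards v0. -/
theorem statement_15 {V : Type*} (T : SimpleGraph V) (hT : T.IsTree) (v0 : V)
    (g : T ≃g T) (hg : IsHyperbolic T g) (w x y : V)
    (hx : NearestPt T (axisSet T g) v0 x)
    (hy : NearestPt T (axisSet T g) w y)
    (hxy : x ≠ y)
    (hseg : seg T v0 w ∩ axisSet T g = seg T x y)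
    (htoward : y ∉ seg T (g y) x) :
    (tl T g < 2 * T.dist x y → T.dist v0 (g w) < T.dist v0 w) ∧
    (2 * T.dist x y = tl T g → T.dist v0 w = T.dist v0 (g w)) ∧
    (2 * T.dist x y < tl T g → T.dist v0 w < T.dist v0 (g w)) :=
  statement_15_general T hT v0 g hg w x y hx hy hseg htoward

end TreePaper

end
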